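/- arXiv:math/9809085 — 5 statements merged into one kernel-verified Lean document; each statement's English description precedes it below -/
import Mathlib

section
/- Let A be a unital Banach algebra and let (I_α) be an increasing net of closed two-sided ideals of A, with I the closure of ⋃ I_α. Then for every a ∈ A, ‖a + I_α‖ → ‖a + I‖, the net of quotient norms decreasing to the quotient norm in A/I. -/
open Filter Metric

namespace Metric

variable {α : Type*} [PseudoMetricSpace α]

theorem infDist_iUnion {ι : Sort*} {s : ι → Set α} (hs : ∀ i, (s i).Nonempty) (x : α) :
    infDist x (⋃ i, s i) = ⨅ i, infDist x (s i) := by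
  simp only [infDist, infEDist_iUnion, ENNReal.toReal_iInf fun i => infEDist_ne_top (hs i)]

variable {ι : Type*} [Preorder ι] {s : ι → Set α}

theorem antitone_infDist (hs : Monotone s) (hne : ∀ i, (s i).Nonempty) (x : α) :
    Antitone fun i => infDist x (s i) :=
  fun i _ hij => infDist_le_infDist_of_subset (hs hij) (hne i)

theorem tendsto_infDist_iUnion (hs : Monotone s) (hne : ∀ i, (s i).Nonempty) (x : α) :
    Tendsto (fun i => infDist x (s i)) atTop (nhds (infDist x (⋃ i, s i))) := by
  rw [infDist_iUnion hne]
  exact tendsto_atTop_ciInf (antitone_infDist hs hne x)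
    ⟨0, Set.forall_mem_range.2 fun _ => infDist_nonneg⟩

end Metric

theorem quotient_norm_tendsto_of_monotone_net_general
    (A : Type*) [NormedRing A]
    (ι : Type*) [Preorder ι]
    (I : ι → TwoSidedIdeal A)
    (hinc : ∀ i j : ι, i ≤ j → (I i : Set A) ⊆ (I j : Set A))
    (a : A) :
    Antitone (fun i => infDist a (I i : Set A)) ∧
      Tendsto (fun i => infDist a (I i : Set A)) atTop
        (nhds (infDist a (closure (⋃ i, (I i : Set A))))) := by
  have hne : ∀ i, (I i : Set A).Nonempty := fun i => ⟨0, (I i).zero_mem⟩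
  rw [infDist_closure]
  exact ⟨antitone_infDist hinc hne a, tendsto_infDist_iUnion hinc hne a⟩

/-- Let `A` be a unital Banach algebra and `(I i)` an increasing net of closed two-sided
ideals, with `I` the closure of their union.  Then for each `a ∈ A` the quotient norms
`‖a + I i‖ = infDist a (I i)` converge, decreasing, to `‖a + I‖`. -/
theorem quotient_norm_tendsto_of_monotone_net
    (A : Type*) [NormedRing A] [NormedAlgebra ℂ A] [CompleteSpace A]
    [NormOneClass A]
    (ι : Type*) [Preorder ι] [IsDirected ι (· ≤ ·)] [Nonempty ι]
    (I : ι → TwoSidedIdeal A)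
    (hclosed : ∀ i, IsClosed ((I i : Set A)))
    (hinc : ∀ i j : ι, i ≤ j → (I i : Set A) ⊆ (I j : Set A))
    (a : A) :
    Antitone (fun i => infDist a (I i : Set A)) ∧
      Tendsto (fun i => infDist a (I i : Set A)) atTop
        (nhds (infDist a (closure (⋃ i, (I i : Set A))))) :=
  quotient_norm_tendsto_of_monotone_net_general A ι I hinc a
end

section
/- Let A be a unital Banach algebra and let (I_α) be a decreasing net of closed two-sided ideals with intersection I. If a ∉ I then liminf_α ‖a + I_α‖ > 0. -/
/-!
The distance from `a` to a decreasing net of sets increases along the net, so its liminf is its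
supremum, which dominates the distance from `a` to a closed ideal `I i₀` not containing `a`;
that distance is positive.
-/

open Filter Metric Set

section

variable {α ι : Type*} [PseudoMetricSpace α] {s : ι → Set α} {x y : α}

lemma monotone_infDist_of_antitone [Preorder ι] (hs : Antitone s) (hne : ∀ i, (s i).Nonempty) :
    Monotone fun i => infDist x (s i) :=
  fun _ j hij => infDist_le_infDist_of_subset (hs hij) (hne j)

lemma bddAbove_range_infDist_of_forall_mem (hy : ∀ i, y ∈ s i) :
    BddAbove (range fun i => infDist x (s i)) :=
  ⟨dist x y, forall_mem_range.2 fun i => infDist_le_dist_of_mem (hy i)⟩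

lemma liminf_infDist_pos_of_antitone [Preorder ι] [IsDirected ι (· ≤ ·)] [Nonempty ι]
    (hs : Antitone s) (hy : ∀ i, y ∈ s i) {i₀ : ι}
    (hclosed : IsClosed (s i₀)) (hx : x ∉ s i₀) :
    0 < liminf (fun i => infDist x (s i)) atTop := by
  have hmono := monotone_infDist_of_antitone (x := x) hs fun i => ⟨y, hy i⟩
  have hbdd := bddAbove_range_infDist_of_forall_mem (x := x) hy
  rw [(tendsto_atTop_ciSup hmono hbdd).liminf_eq]
  exact ((hclosed.notMem_iff_infDist_pos ⟨y, hy i₀⟩).1 hx).trans_le (le_ciSup hbdd i₀)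

end

theorem liminf_quotient_norm_pos_general
    (A : Type*) [NormedRing A]
    (ι : Type*) [Preorder ι] [IsDirected ι (· ≤ ·)] [Nonempty ι]
    (I : ι → TwoSidedIdeal A)
    (hclosed : ∀ i, IsClosed ((I i : Set A)))
    (hdec : ∀ i j : ι, i ≤ j → (I j : Set A) ⊆ (I i : Set A))
    (a : A) (ha : a ∉ ⋂ i, (I i : Set A)) :
    0 < Filter.liminf (fun i => infDist a (I i : Set A)) atTop := by
  obtain ⟨i₀, hi₀⟩ : ∃ i₀, a ∉ (I i₀ : Set A) := by simpa using ha
  exact liminf_infDist_pos_of_antitone (fun _ _ => hdec _ _) (fun i => (I i).zero_mem)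
    (hclosed i₀) hi₀

/-- Let `A` be a unital Banach algebra and `(I i)` a decreasing net of closed two-sided
ideals with intersection `I`.  If `a ∉ I` then `liminf ‖a + I i‖ > 0`
(the normality property of the net with respect to `I`). -/
theorem liminf_quotient_norm_pos
    (A : Type*) [NormedRing A] [NormedAlgebra ℂ A] [CompleteSpace A]
    [NormOneClass A]
    (ι : Type*) [Preorder ι] [IsDirected ι (· ≤ ·)] [Nonempty ι]
    (I : ι → TwoSidedIdeal A)
    (hclosed : ∀ i, IsClosed ((I i : Set A)))
    (hdec : ∀ i j : ι, i ≤ j → (I j : Set A) ⊆ (I i : Set A))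
    (a : A) (ha : a ∉ ⋂ i, (I i : Set A)) :
    0 < Filter.liminf (fun i => infDist a (I i : Set A)) atTop :=
  liminf_quotient_norm_pos_general A ι I hclosed hdec a ha
end

section
/- Let A be a uniform algebra on its maximal ideal space Max(A), let X be a closed subset of Max(A), and let F be a p-set in Max(A). If f ∈ A vanishes on X, then the quotient norm of f modulo the ideal I(X ∪ F) of functions vanishing on X ∪ F equals sup{|f(y)| : y ∈ F}. -/
open Metric

/-- `E` is a peak set for the uniform algebra `A`. -/
def IsPeakSet {K : Type*} [TopologicalSpace K]
    (A : Subalgebra ℂ C(K, ℂ)) (E : Set K) : Prop :=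
  ∃ f ∈ A, (∀ x ∈ E, f x = 1) ∧ ∀ x ∉ E, ‖f x‖ < 1

/-- `F` is a p-set (an intersection of peak sets) for the uniform algebra `A`. -/
def IsPSet {K : Type*} [TopologicalSpace K]
    (A : Subalgebra ℂ C(K, ℂ)) (F : Set K) : Prop :=
  ∃ 𝒮 : Set (Set K), 𝒮.Nonempty ∧ (∀ E ∈ 𝒮, IsPeakSet A E) ∧ F = ⋂₀ 𝒮

/-!
The inequality `sup_F |f| ≤ ‖f - g‖` for every `g` vanishing on `F` is immediate. Conversely,
given `ε > 0`, compactness yields a single peak set `E` with `F ⊆ E ⊆ U := {|f| < sup_F |f| + ε}`.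
If `p` peaks on `E`, then `|p| ≤ r < 1` off `U`, so `‖f pⁿ‖ ≤ sup_F |f| + ε` for large `n`, while
`g = f (1 - pⁿ) ∈ A` vanishes on `X ∪ F`; thus `‖f - g‖ = ‖f pⁿ‖` is as small as required.
-/

section PeakSets

variable {K : Type*} [TopologicalSpace K] {A : Subalgebra ℂ C(K, ℂ)}

lemma norm_le_one_of_peaks {E : Set K} {p : C(K, ℂ)} (hp₁ : ∀ x ∈ E, p x = 1)
    (hp : ∀ x ∉ E, ‖p x‖ < 1) (x : K) : ‖p x‖ ≤ 1 := by
  by_cases hx : x ∈ E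
  · simp [hp₁ x hx]
  · exact (hp x hx).le

lemma IsPeakSet.isClosed {E : Set K} (hE : IsPeakSet A E) : IsClosed E := by
  obtain ⟨p, -, hp₁, hp⟩ := hE
  have : E = p ⁻¹' {1} := by
    ext x
    exact ⟨hp₁ x, fun hx => by_contra fun hxE => (hp x hxE).ne (by simp [show p x = 1 from hx])⟩
  exact this ▸ isClosed_singleton.preimage p.continuous

variable (A) in
lemma isPeakSet_univ : IsPeakSet A Set.univ :=
  ⟨1, one_mem A, fun _ _ => rfl, fun x hx => absurd (Set.mem_univ x) hx⟩

lemma IsPeakSet.inter {E₁ E₂ : Set K} (h₁ : IsPeakSet A E₁) (h₂ : IsPeakSet A E₂) :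
    IsPeakSet A (E₁ ∩ E₂) := by
  obtain ⟨p, hpA, hp₁, hp⟩ := h₁
  obtain ⟨q, hqA, hq₁, hq⟩ := h₂
  refine ⟨p * q, mul_mem hpA hqA, fun x hx => by simp [hp₁ x hx.1, hq₁ x hx.2], fun x hx => ?_⟩
  rw [ContinuousMap.mul_apply, norm_mul]
  by_cases hx₁ : x ∈ E₁
  · have hx₂ : x ∉ E₂ := fun hx₂ => hx ⟨hx₁, hx₂⟩
    nlinarith [norm_le_one_of_peaks hp₁ hp x, hq x hx₂, norm_nonneg (q x)]
  · nlinarith [norm_le_one_of_peaks hq₁ hq x, hp x hx₁, norm_nonneg (p x)]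

lemma IsPeakSet.biInter_finset {ι : Type*} {E : ι → Set K} (t : Finset ι)
    (h : ∀ i ∈ t, IsPeakSet A (E i)) : IsPeakSet A (⋂ i ∈ t, E i) := by
  classical
  induction t using Finset.induction_on with
  | empty => simpa using isPeakSet_univ A
  | insert a s _ ih =>
    rw [Finset.set_biInter_insert]
    exact (h a (s.mem_insert_self a)).inter (ih fun i hi => h i (Finset.mem_insert_of_mem hi))

variable [CompactSpace K]

lemma IsPSet.exists_isPeakSet_subset_open {F U : Set K} (hF : IsPSet A F) (hU : IsOpen U)
    (hFU : F ⊆ U) : ∃ E, IsPeakSet A E ∧ F ⊆ E ∧ E ⊆ U := by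
  obtain ⟨𝒮, -, h𝒮, rfl⟩ := hF
  have hempty : Uᶜ ∩ ⋂ E : 𝒮, (E : Set K) = ∅ := by
    rw [← Set.sInter_eq_iInter, Set.inter_comm, ← Set.disjoint_iff_inter_eq_empty,
      Set.disjoint_compl_right_iff_subset]
    exact hFU
  obtain ⟨t, ht⟩ := hU.isClosed_compl.isCompact.elim_finite_subfamily_closed _
    (fun E : 𝒮 => (h𝒮 E E.2).isClosed) hempty
  refine ⟨⋂ E ∈ t, (E : Set K), IsPeakSet.biInter_finset t fun E _ => h𝒮 E E.2,
    fun x hx => Set.mem_iInter₂.2 fun E _ => hx E E.2, fun x hx => ?_⟩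
  by_contra hxU
  exact (Set.eq_empty_iff_forall_notMem.1 ht) x ⟨hxU, hx⟩

lemma IsPeakSet.exists_norm_le_lt_one_off_open {E U : Set K} (hE : IsPeakSet A E)
    (hU : IsOpen U) (hEU : E ⊆ U) :
    ∃ p ∈ A, (∀ x ∈ E, p x = 1) ∧ (∀ x, ‖p x‖ ≤ 1) ∧ ∃ r < 1, ∀ x ∉ U, ‖p x‖ ≤ r := by
  obtain ⟨p, hpA, hp₁, hp⟩ := hE
  refine ⟨p, hpA, hp₁, norm_le_one_of_peaks hp₁ hp, ?_⟩
  rcases (Uᶜ).eq_empty_or_nonempty with hUc | hUc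
  · exact ⟨0, one_pos, fun x hx => absurd (hUc ▸ hx : x ∈ (∅ : Set K)) (Set.notMem_empty x)⟩
  · obtain ⟨x₀, hx₀, hmax⟩ := hU.isClosed_compl.isCompact.exists_isMaxOn hUc
      (continuous_norm.comp p.continuous).continuousOn
    exact ⟨‖p x₀‖, hp x₀ fun hx₀E => hx₀ (hEU hx₀E), fun x hx => hmax hx⟩

end PeakSets

section QuotientNorm

variable {K : Type*} [TopologicalSpace K] [CompactSpace K]

lemma bddAbove_norm_image (f : C(K, ℂ)) (F : Set K) : BddAbove ((fun y => ‖f y‖) '' F) :=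
  ⟨‖f‖, by rintro _ ⟨y, -, rfl⟩; exact f.norm_coe_le_norm y⟩

lemma sSup_norm_image_le_infDist (f : C(K, ℂ)) {F : Set K} {S : Set C(K, ℂ)}
    (hS : S.Nonempty) (hSF : ∀ g ∈ S, ∀ y ∈ F, g y = 0) :
    sSup ((fun y => ‖f y‖) '' F) ≤ infDist f S := by
  refine Real.sSup_le ?_ infDist_nonneg
  rintro _ ⟨y, hy, rfl⟩
  refine (le_infDist hS).2 fun g hg => ?_
  calc ‖f y‖ = ‖(f - g) y‖ := by simp [hSF g hg y hy]
    _ ≤ dist f g := dist_eq_norm f g ▸ (f - g).norm_coe_le_norm y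

lemma exists_norm_mul_pow_le {f p : C(K, ℂ)} {U : Set K} {c r : ℝ} (hc : 0 < c) (hr : r < 1)
    (hfU : ∀ x ∈ U, ‖f x‖ ≤ c) (hp : ∀ x, ‖p x‖ ≤ 1) (hpU : ∀ x ∉ U, ‖p x‖ ≤ r) :
    ∃ n : ℕ, ‖f * p ^ n‖ ≤ c := by
  have hr₀ : 0 ≤ max r 0 := le_max_right r 0
  have hlim : Filter.Tendsto (fun n : ℕ => ‖f‖ * max r 0 ^ n) Filter.atTop (nhds 0) := by
    simpa using (tendsto_pow_atTop_nhds_zero_of_lt_one hr₀ (max_lt hr one_pos)).const_mul ‖f‖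
  obtain ⟨n, hn⟩ := (hlim.eventually (eventually_le_nhds hc)).exists
  refine ⟨n, (ContinuousMap.norm_le _ hc.le).2 fun x => ?_⟩
  rw [ContinuousMap.mul_apply, ContinuousMap.pow_apply, norm_mul, norm_pow]
  by_cases hx : x ∈ U
  · calc ‖f x‖ * ‖p x‖ ^ n ≤ ‖f x‖ * 1 := by gcongr; exact pow_le_one₀ (norm_nonneg _) (hp x)
      _ ≤ c := by simpa using hfU x hx
  · calc ‖f x‖ * ‖p x‖ ^ n ≤ ‖f‖ * max r 0 ^ n := by
          gcongr
          · exact f.norm_coe_le_norm x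
          · exact (hpU x hx).trans (le_max_left r 0)
      _ ≤ c := hn

end QuotientNorm

theorem quotient_norm_eq_sup_on_pSet_general
    (K : Type*) [TopologicalSpace K] [CompactSpace K]
    (A : Subalgebra ℂ C(K, ℂ))
    (X : Set K) (F : Set K) (hF : IsPSet A F)
    (f : C(K, ℂ)) (hfA : f ∈ A) (hfX : ∀ x ∈ X, f x = 0) :
    infDist f {g : C(K, ℂ) | g ∈ A ∧ ∀ x ∈ X ∪ F, g x = 0}
      = sSup ((fun y => ‖f y‖) '' F) := by
  set s := sSup ((fun y => ‖f y‖) '' F)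
  refine le_antisymm (le_of_forall_pos_le_add fun ε hε => ?_)
    (sSup_norm_image_le_infDist f ⟨0, zero_mem A, fun _ _ => rfl⟩ fun g hg y hy => hg.2 y (.inr hy))
  have hs : 0 ≤ s := Real.sSup_nonneg (by rintro _ ⟨y, -, rfl⟩; positivity)
  set U := {x | ‖f x‖ < s + ε}
  have hU : IsOpen U := isOpen_lt (continuous_norm.comp f.continuous) continuous_const
  have hFU : F ⊆ U := fun y hy =>
    (le_csSup (bddAbove_norm_image f F) ⟨y, hy, rfl⟩).trans_lt (lt_add_of_pos_right s hε)
  obtain ⟨E, hE, hFE, hEU⟩ := hF.exists_isPeakSet_subset_open hU hFU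
  obtain ⟨p, hpA, hp₁, hp, r, hr, hpU⟩ := hE.exists_norm_le_lt_one_off_open hU hEU
  obtain ⟨n, hn⟩ := exists_norm_mul_pow_le (by positivity) hr (fun x hx => le_of_lt hx) hp hpU
  have hg : f * (1 - p ^ n) ∈ {g : C(K, ℂ) | g ∈ A ∧ ∀ x ∈ X ∪ F, g x = 0} := by
    refine ⟨mul_mem hfA (sub_mem (one_mem A) (pow_mem hpA n)), ?_⟩
    rintro x (hx | hx)
    · simp [hfX x hx]
    · simp [hp₁ x (hFE hx)]
  calc infDist f _ ≤ dist f (f * (1 - p ^ n)) := infDist_le_dist_of_mem hg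
    _ = ‖f * p ^ n‖ := by rw [dist_eq_norm]; ring_nf
    _ ≤ s + ε := hn

/-- Let `A` be a uniform algebra on the compact Hausdorff space `K`, `X ⊆ K` closed and
`F` a p-set.  If `f ∈ A` vanishes on `X`, then the quotient norm of `f` modulo the ideal
`I(X ∪ F)` of elements of `A` vanishing on `X ∪ F` equals `sup {|f y| : y ∈ F}`. -/
theorem quotient_norm_eq_sup_on_pSet
    (K : Type*) [TopologicalSpace K] [CompactSpace K] [T2Space K]
    (A : Subalgebra ℂ C(K, ℂ)) (hA : IsClosed (A : Set C(K, ℂ)))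
    (hsep : ∀ x y : K, x ≠ y → ∃ f ∈ A, f x ≠ f y)
    (X : Set K) (hX : IsClosed X) (F : Set K) (hF : IsPSet A F)
    (f : C(K, ℂ)) (hfA : f ∈ A) (hfX : ∀ x ∈ X, f x = 0) :
    infDist f {g : C(K, ℂ) | g ∈ A ∧ ∀ x ∈ X ∪ F, g x = 0}
      = sSup ((fun y => ‖f y‖) '' F) :=
  quotient_norm_eq_sup_on_pSet_general K A X F hF f hfA hfX
end

section
/- Let A = C^1[0,1], let C ⊆ [0,1] be closed and D ⊆ [0,1]² be closed with D ⊆ C × C and D containing all off-diagonal points of C × C. Define I(C,D) = {f ∈ A : f(x) = 0 for all x ∈ C, and φ_{x,y}(f) = 0 for all (x,y) ∈ D}. Then I(C,D) is a closed ideal of A. -/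
open Set

/-- The divided-difference functional `φ_{x,y}` on `C¹[0,1]`. -/
noncomputable def phiC1 (f : ℝ → ℂ) (x y : ℝ) : ℂ :=
  if x = y then derivWithin f (Icc 0 1) x else (f x - f y) / (x - y)

/-- Membership in the algebra `A = C¹[0,1]`. -/
def MemC1 (f : ℝ → ℂ) : Prop := ContDiffOn ℝ 1 f (Icc 0 1)

/-- The `C¹`-norm `‖f‖ = ‖f‖_∞ + ‖f'‖_∞` on `[0,1]`. -/
noncomputable def C1norm (f : ℝ → ℂ) : ℝ :=
  sSup ((fun x => ‖f x‖) '' Icc 0 1) +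
    sSup ((fun x => ‖derivWithin f (Icc 0 1) x‖) '' Icc 0 1)

/-- The set `I(C,D) = {f ∈ C¹[0,1] : f = 0 on C, φ_{x,y}(f) = 0 on D}`. -/
def MemICD (C : Set ℝ) (D : Set (ℝ × ℝ)) (f : ℝ → ℂ) : Prop :=
  MemC1 f ∧ (∀ x ∈ C, f x = 0) ∧ ∀ p ∈ D, phiC1 f p.1 p.2 = 0

/-!
Off the diagonal, the divided difference of a function vanishing on `C` is automatically `0`,
so `f ∈ I(C,D)` just says that `f` vanishes on `C` and `f'` vanishes at the diagonal points
of `D`. These are conditions on the values of `f` and `f'` at single points: they are linear,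
survive multiplication by any `C¹` function by the Leibniz rule (a function of `I(C,D)`
vanishes wherever its derivative is required to), and pass to limits because both point
evaluations are bounded by the `C¹` norm.
-/

theorem norm_le_sSup_image_norm {E : Type*} [NormedAddCommGroup E] {s : Set ℝ}
    (hs : IsCompact s) {u : ℝ → E} (hu : ContinuousOn u s) {x : ℝ} (hx : x ∈ s) :
    ‖u x‖ ≤ sSup ((fun x => ‖u x‖) '' s) :=
  le_csSup (hs.bddAbove_image hu.norm) ⟨x, hx, rfl⟩

section C1norm

variable {h : ℝ → ℂ} (hh : MemC1 h) {x : ℝ} (hx : x ∈ Icc (0 : ℝ) 1)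
include hh hx

theorem norm_le_C1norm : ‖h x‖ ≤ C1norm h := by
  have hderiv := hh.continuousOn_derivWithin (uniqueDiffOn_Icc zero_lt_one) le_rfl
  exact (norm_le_sSup_image_norm isCompact_Icc hh.continuousOn hx).trans <|
    le_add_of_nonneg_right <|
      (norm_nonneg _).trans (norm_le_sSup_image_norm isCompact_Icc hderiv hx)

theorem norm_derivWithin_le_C1norm : ‖derivWithin h (Icc 0 1) x‖ ≤ C1norm h := by
  have hderiv := hh.continuousOn_derivWithin (uniqueDiffOn_Icc zero_lt_one) le_rfl
  exact (norm_le_sSup_image_norm isCompact_Icc hderiv hx).trans <|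
    le_add_of_nonneg_left <|
      (norm_nonneg _).trans (norm_le_sSup_image_norm isCompact_Icc hh.continuousOn hx)

end C1norm

theorem MemC1.differentiableWithinAt {f : ℝ → ℂ} (hf : MemC1 f) {x : ℝ}
    (hx : x ∈ Icc (0 : ℝ) 1) : DifferentiableWithinAt ℝ f (Icc 0 1) x :=
  hf.differentiableOn one_ne_zero x hx

theorem MemC1.apply_eq_zero_of_approx {f : ℝ → ℂ} (hf : MemC1 f) {x : ℝ}
    (hx : x ∈ Icc (0 : ℝ) 1)
    (happ : ∀ ε > 0, ∃ g, MemC1 g ∧ g x = 0 ∧ C1norm (f - g) < ε) : f x = 0 := by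
  refine norm_le_zero_iff.mp (le_of_forall_pos_lt_add fun ε hε => ?_)
  obtain ⟨g, hg, hgx, hlt⟩ := happ ε hε
  calc ‖f x‖ = ‖(f - g) x‖ := by simp [hgx]
    _ ≤ C1norm (f - g) := norm_le_C1norm (hf.sub hg) hx
    _ < 0 + ε := by linarith

theorem MemC1.derivWithin_eq_zero_of_approx {f : ℝ → ℂ} (hf : MemC1 f) {x : ℝ}
    (hx : x ∈ Icc (0 : ℝ) 1)
    (happ : ∀ ε > 0, ∃ g, MemC1 g ∧ derivWithin g (Icc 0 1) x = 0 ∧ C1norm (f - g) < ε) :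
    derivWithin f (Icc 0 1) x = 0 := by
  refine norm_le_zero_iff.mp (le_of_forall_pos_lt_add fun ε hε => ?_)
  obtain ⟨g, hg, hgx, hlt⟩ := happ ε hε
  calc ‖derivWithin f (Icc 0 1) x‖ = ‖derivWithin (f - g) (Icc 0 1) x‖ := by
        rw [derivWithin_sub (hf.differentiableWithinAt hx) (hg.differentiableWithinAt hx),
          hgx, sub_zero]
    _ ≤ C1norm (f - g) := norm_derivWithin_le_C1norm (hf.sub hg) hx
    _ < 0 + ε := by linarith

theorem phiC1_self (f : ℝ → ℂ) (x : ℝ) : phiC1 f x x = derivWithin f (Icc 0 1) x :=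
  if_pos rfl

theorem phiC1_eq_zero_of_ne {f : ℝ → ℂ} {x y : ℝ} (hxy : x ≠ y) (hx : f x = 0)
    (hy : f y = 0) : phiC1 f x y = 0 := by
  simp [phiC1, hxy, hx, hy]

section MemICD

variable {C : Set ℝ} {D : Set (ℝ × ℝ)} {f g : ℝ → ℂ}

theorem memICD_iff (hDC : D ⊆ C ×ˢ C) :
    MemICD C D f ↔ MemC1 f ∧ (∀ x ∈ C, f x = 0) ∧
      ∀ x, (x, x) ∈ D → derivWithin f (Icc 0 1) x = 0 := by
  constructor
  · rintro ⟨hf, hfC, hfD⟩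
    exact ⟨hf, hfC, fun x hx => phiC1_self f x ▸ hfD _ hx⟩
  · rintro ⟨hf, hfC, hfD⟩
    refine ⟨hf, hfC, fun ⟨x, y⟩ hxy => ?_⟩
    obtain ⟨hx, hy⟩ := hDC hxy
    rcases eq_or_ne x y with rfl | hne
    · exact (phiC1_self f x).trans (hfD x hxy)
    · exact phiC1_eq_zero_of_ne hne (hfC x hx) (hfC y hy)

theorem memICD_zero : MemICD C D 0 :=
  ⟨contDiffOn_const, fun _ _ => rfl, fun _ _ => by simp [phiC1]⟩

variable (hCI : C ⊆ Icc 0 1) (hDC : D ⊆ C ×ˢ C)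
include hCI hDC

theorem MemICD.add (hf : MemICD C D f) (hg : MemICD C D g) : MemICD C D (f + g) := by
  rw [memICD_iff hDC] at hf hg ⊢
  obtain ⟨hf, hfC, hfD⟩ := hf
  obtain ⟨hg, hgC, hgD⟩ := hg
  refine ⟨hf.add hg, fun x hx => by simp [hfC x hx, hgC x hx], fun x hx => ?_⟩
  have hxI := hCI (hDC hx).1
  rw [derivWithin_add (hf.differentiableWithinAt hxI) (hg.differentiableWithinAt hxI),
    hfD x hx, hgD x hx, add_zero]

theorem MemICD.const_smul (c : ℂ) (hf : MemICD C D f) : MemICD C D (c • f) := by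
  rw [memICD_iff hDC] at hf ⊢
  obtain ⟨hf, hfC, hfD⟩ := hf
  refine ⟨hf.const_smul c, fun x hx => by simp [hfC x hx], fun x hx => ?_⟩
  rw [derivWithin_const_smul c (hf.differentiableWithinAt (hCI (hDC hx).1)), hfD x hx,
    smul_zero]

theorem MemICD.mul_left (hf : MemC1 f) (hg : MemICD C D g) : MemICD C D (f * g) := by
  rw [memICD_iff hDC] at hg ⊢
  obtain ⟨hg, hgC, hgD⟩ := hg
  refine ⟨hf.mul hg, fun x hx => by simp [hgC x hx], fun x hx => ?_⟩
  have hxC := (hDC hx).1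
  rw [derivWithin_mul (hf.differentiableWithinAt (hCI hxC))
    (hg.differentiableWithinAt (hCI hxC)), hgC x hxC, hgD x hx, mul_zero, mul_zero, add_zero]

theorem MemC1.memICD_of_approx (hf : MemC1 f)
    (happ : ∀ ε > 0, ∃ g, MemICD C D g ∧ C1norm (f - g) < ε) : MemICD C D f := by
  simp only [memICD_iff hDC] at happ ⊢
  refine ⟨hf, fun x hx => hf.apply_eq_zero_of_approx (hCI hx) fun ε hε => ?_,
    fun x hx => hf.derivWithin_eq_zero_of_approx (hCI (hDC hx).1) fun ε hε => ?_⟩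
  · obtain ⟨g, ⟨hg, hgC, -⟩, hlt⟩ := happ ε hε
    exact ⟨g, hg, hgC x hx, hlt⟩
  · obtain ⟨g, ⟨hg, -, hgD⟩, hlt⟩ := happ ε hε
    exact ⟨g, hg, hgD x hx, hlt⟩

end MemICD

theorem ICD_closed_ideal_general
    (C : Set ℝ) (hCI : C ⊆ Icc 0 1)
    (D : Set (ℝ × ℝ)) (hDC : D ⊆ C ×ˢ C) :
    MemICD C D 0 ∧
      (∀ f g, MemICD C D f → MemICD C D g → MemICD C D (f + g)) ∧
      (∀ (c : ℂ) f, MemICD C D f → MemICD C D (c • f)) ∧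
      (∀ f g, MemC1 f → MemICD C D g → MemICD C D (f * g)) ∧
      (∀ f, MemC1 f → (∀ ε > 0, ∃ g, MemICD C D g ∧ C1norm (f - g) < ε) →
        MemICD C D f) :=
  ⟨memICD_zero, fun _ _ hf hg => hf.add hCI hDC hg,
    fun c _ hf => hf.const_smul hCI hDC c, fun _ _ hf hg => hg.mul_left hCI hDC hf,
    fun _ hf happ => hf.memICD_of_approx hCI hDC happ⟩

/-- `I(C,D)` is a closed ideal of `A = C¹[0,1]`: it contains `0`, is closed under
addition, under scalar multiplication, under multiplication by elements of `A`, and is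
topologically closed in `A` for the norm `‖f‖_∞ + ‖f'‖_∞`. -/
theorem ICD_closed_ideal
    (C : Set ℝ) (hC : IsClosed C) (hCI : C ⊆ Icc 0 1)
    (D : Set (ℝ × ℝ)) (hD : IsClosed D) (hDC : D ⊆ C ×ˢ C)
    (hDdiag : ∀ x ∈ C, ∀ y ∈ C, x ≠ y → (x, y) ∈ D) :
    MemICD C D 0 ∧
      (∀ f g, MemICD C D f → MemICD C D g → MemICD C D (f + g)) ∧
      (∀ (c : ℂ) f, MemICD C D f → MemICD C D (c • f)) ∧
      (∀ f g, MemC1 f → MemICD C D g → MemICD C D (f * g)) ∧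
      (∀ f, MemC1 f → (∀ ε > 0, ∃ g, MemICD C D g ∧ C1norm (f - g) < ε) →
        MemICD C D f) :=
  ICD_closed_ideal_general C hCI D hDC
end

section
/- Let [0,1] be the unit interval, M ⊆ [0,1] a closed set, and x₀ ∈ [0,1] \ M with d = dist(x₀, M) > 0. Then for every c ∈ ℂ and every ε > 0 there exists g ∈ C^1[0,1] such that g(x₀) = c, g vanishes on M, and ‖g‖_∞ + ‖g'‖_∞ < |c| + |c|/d + ε. -/
open Set Metric

/-!
Take `g x = φ (x - x₀) · c` with `φ` a `C¹` even bump, `φ 0 = 1`, `0 ≤ φ ≤ 1`, supported in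
`[-d, d]`, whose derivative on `[0, d]` is minus a trapezoid of area `1` and height `1 / (d - b)`.
Then `‖g‖_∞ ≤ ‖c‖` and `‖g'‖_∞ ≤ ‖c‖ / (d - b)`, which beats `‖c‖ / d + ε` for small `b > 0`.
Such a `φ` is an explicit combination of translates of `s ↦ s |s|`, a `C¹` primitive of `2 |s|`.
-/

open Filter Topology

lemma hasDerivAt_mul_abs (t : ℝ) : HasDerivAt (fun s : ℝ => s * |s|) (2 * |t|) t := by
  rcases lt_trichotomy t 0 with ht | rfl | ht
  · have h : HasDerivAt (fun s : ℝ => -(s * s)) (2 * |t|) t := by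
      refine ((hasDerivAt_id t).mul (hasDerivAt_id t)).neg.congr_deriv ?_
      simp only [id, abs_of_neg ht]; ring
    refine h.congr_of_eventuallyEq ?_
    filter_upwards [Iio_mem_nhds ht] with s hs
    rw [abs_of_neg hs]; ring
  · rw [hasDerivAt_iff_tendsto_slope_zero]
    have h : Tendsto (fun s : ℝ => |s|) (𝓝[≠] 0) (𝓝 (2 * |0|)) := by
      simpa using (continuous_abs.tendsto (0 : ℝ)).mono_left nhdsWithin_le_nhds
    refine h.congr' ?_
    filter_upwards [self_mem_nhdsWithin] with s hs
    rw [smul_eq_mul, zero_add, zero_mul, sub_zero, inv_mul_cancel_left₀ hs]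
  · have h : HasDerivAt (fun s : ℝ => s * s) (2 * |t|) t := by
      refine ((hasDerivAt_id t).mul (hasDerivAt_id t)).congr_deriv ?_
      simp only [id, abs_of_pos ht]; ring
    refine h.congr_of_eventuallyEq ?_
    filter_upwards [Ioi_mem_nhds ht] with s hs
    rw [abs_of_pos hs]

/-- For `0 < 2 * b < d`, the derivative `peakProfileDeriv d b` is `0` at `0`, decreases linearly
to `-1 / (d - b)` on `[0, b]`, stays there on `[b, d - b]` and returns linearly to `0` on
`[d - b, d]`. -/
noncomputable def peakProfile (d b t : ℝ) : ℝ :=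
  ((t + d) * |t + d| - (t + (d - b)) * |t + (d - b)| - (t + b) * |t + b|
    + (t - b) * |t - b| + (t - (d - b)) * |t - (d - b)| - (t - d) * |t - d|) / (4 * b * (d - b))

noncomputable def peakProfileDeriv (d b t : ℝ) : ℝ :=
  (|t + d| - |t + (d - b)| - |t + b| + |t - b| + |t - (d - b)| - |t - d|) / (2 * b * (d - b))

lemma hasDerivAt_peakProfile (d b t : ℝ) :
    HasDerivAt (peakProfile d b) (peakProfileDeriv d b t) t := by
  have h := (((((((hasDerivAt_mul_abs (t + d)).comp_add_const t d).sub
    ((hasDerivAt_mul_abs (t + (d - b))).comp_add_const t (d - b))).sub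
    ((hasDerivAt_mul_abs (t + b)).comp_add_const t b)).add
    ((hasDerivAt_mul_abs (t - b)).comp_sub_const t b)).add
    ((hasDerivAt_mul_abs (t - (d - b))).comp_sub_const t (d - b))).sub
    ((hasDerivAt_mul_abs (t - d)).comp_sub_const t d)).div_const (4 * b * (d - b))
  refine h.congr_deriv ?_
  rw [peakProfileDeriv, ← mul_div_mul_left _ (2 * b * (d - b)) two_ne_zero]
  ring_nf

lemma continuous_peakProfileDeriv (d b : ℝ) : Continuous (peakProfileDeriv d b) := by
  unfold peakProfileDeriv
  fun_prop

lemma peakProfile_neg (d b t : ℝ) : peakProfile d b (-t) = peakProfile d b t := by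
  unfold peakProfile
  rw [show -t + d = -(t - d) by ring, show -t + (d - b) = -(t - (d - b)) by ring,
    show -t + b = -(t - b) by ring, show -t - b = -(t + b) by ring,
    show -t - (d - b) = -(t + (d - b)) by ring, show -t - d = -(t + d) by ring]
  simp only [abs_neg]
  ring

section
variable {d b : ℝ} (hb : 0 < b) (hbd : 2 * b < d)
include hb hbd

lemma peakProfile_zero : peakProfile d b 0 = 1 := by
  have hb0 : b ≠ 0 := by linarith
  have hdb : d - b ≠ 0 := by linarith
  unfold peakProfile
  rw [abs_of_pos (by linarith : (0:ℝ) < 0 + d), abs_of_pos (by linarith : (0:ℝ) < 0 + (d - b)),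
    abs_of_pos (by linarith : (0:ℝ) < 0 + b), abs_of_neg (by linarith : (0:ℝ) - b < 0),
    abs_of_neg (by linarith : (0:ℝ) - (d - b) < 0), abs_of_neg (by linarith : (0:ℝ) - d < 0)]
  field_simp
  ring

lemma peakProfile_of_le {t : ℝ} (ht : d ≤ t) : peakProfile d b t = 0 := by
  unfold peakProfile
  rw [abs_of_nonneg (by linarith : (0:ℝ) ≤ t + d),
    abs_of_nonneg (by linarith : (0:ℝ) ≤ t + (d - b)), abs_of_nonneg (by linarith : (0:ℝ) ≤ t + b),
    abs_of_nonneg (by linarith : (0:ℝ) ≤ t - b), abs_of_nonneg (by linarith : (0:ℝ) ≤ t - (d - b)),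
    abs_of_nonneg (by linarith : (0:ℝ) ≤ t - d)]
  ring

lemma peakProfileDeriv_abs_le (t : ℝ) : |peakProfileDeriv d b t| ≤ 1 / (d - b) := by
  have hnum :
      |(|t + d| - |t + (d - b)| - |t + b| + |t - b| + |t - (d - b)| - |t - d|)| ≤ 2 * b := by
    rw [abs_le]
    constructor <;>
    · rcases abs_cases (t + d) with ⟨e1, _⟩ | ⟨e1, _⟩ <;>
      rcases abs_cases (t + (d - b)) with ⟨e2, _⟩ | ⟨e2, _⟩ <;>
      rcases abs_cases (t + b) with ⟨e3, _⟩ | ⟨e3, _⟩ <;>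
      rcases abs_cases (t - b) with ⟨e4, _⟩ | ⟨e4, _⟩ <;>
      rcases abs_cases (t - (d - b)) with ⟨e5, _⟩ | ⟨e5, _⟩ <;>
      rcases abs_cases (t - d) with ⟨e6, _⟩ | ⟨e6, _⟩ <;>
      rw [e1, e2, e3, e4, e5, e6] <;> linarith
  have hden : 0 < 2 * b * (d - b) := by nlinarith
  rw [peakProfileDeriv, abs_div, abs_of_pos hden, div_le_div_iff₀ hden (by linarith)]
  nlinarith

lemma peakProfileDeriv_nonpos {t : ℝ} (ht : 0 ≤ t) : peakProfileDeriv d b t ≤ 0 := by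
  have hnum : |t + d| - |t + (d - b)| - |t + b| + |t - b| + |t - (d - b)| - |t - d| ≤ 0 := by
    rcases abs_cases (t + d) with ⟨e1, _⟩ | ⟨e1, _⟩ <;>
    rcases abs_cases (t + (d - b)) with ⟨e2, _⟩ | ⟨e2, _⟩ <;>
    rcases abs_cases (t + b) with ⟨e3, _⟩ | ⟨e3, _⟩ <;>
    rcases abs_cases (t - b) with ⟨e4, _⟩ | ⟨e4, _⟩ <;>
    rcases abs_cases (t - (d - b)) with ⟨e5, _⟩ | ⟨e5, _⟩ <;>
    rcases abs_cases (t - d) with ⟨e6, _⟩ | ⟨e6, _⟩ <;>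
    rw [e1, e2, e3, e4, e5, e6] <;> linarith
  exact div_nonpos_of_nonpos_of_nonneg hnum (by nlinarith)

lemma antitoneOn_peakProfile : AntitoneOn (peakProfile d b) (Ici 0) :=
  antitoneOn_of_hasDerivWithinAt_nonpos (convex_Ici 0)
    (fun t _ => (hasDerivAt_peakProfile d b t).continuousAt.continuousWithinAt)
    (fun t _ => (hasDerivAt_peakProfile d b t).hasDerivWithinAt)
    (fun _ ht => peakProfileDeriv_nonpos hb hbd (interior_subset ht))

lemma abs_peakProfile_le_one (t : ℝ) : |peakProfile d b t| ≤ 1 := by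
  wlog ht : 0 ≤ t generalizing t
  · simpa [peakProfile_neg] using this (-t) (by linarith)
  have hd : (0 : ℝ) ≤ d := by linarith
  have hle := antitoneOn_peakProfile hb hbd self_mem_Ici (mem_Ici.2 ht) ht
  rw [peakProfile_zero hb hbd] at hle
  refine abs_le.2 ⟨?_, hle⟩
  rcases le_total t d with htd | hdt
  · have := antitoneOn_peakProfile hb hbd (mem_Ici.2 ht) (mem_Ici.2 hd) htd
    rw [peakProfile_of_le hb hbd le_rfl] at this
    linarith
  · rw [peakProfile_of_le hb hbd hdt]; norm_num

lemma peakProfile_of_le_abs {t : ℝ} (ht : d ≤ |t|) : peakProfile d b t = 0 := by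
  rcases abs_cases t with ⟨e, _⟩ | ⟨e, _⟩
  · exact peakProfile_of_le hb hbd (e ▸ ht)
  · rw [← peakProfile_neg]
    exact peakProfile_of_le hb hbd (e ▸ ht)

end

lemma C1norm_le {f : ℝ → ℂ} (hf : Differentiable ℝ f) {A B : ℝ} (hA : ∀ x, ‖f x‖ ≤ A)
    (hB : ∀ x, ‖deriv f x‖ ≤ B) : C1norm f ≤ A + B := by
  have hne : (Icc (0 : ℝ) 1).Nonempty := nonempty_Icc.2 zero_le_one
  refine add_le_add (csSup_le (hne.image _) ?_) (csSup_le (hne.image _) ?_)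
  · rintro _ ⟨x, -, rfl⟩
    exact hA x
  · rintro _ ⟨x, hx, rfl⟩
    dsimp only
    rw [(hf x).derivWithin (uniqueDiffOn_Icc zero_lt_one x hx)]
    exact hB x

section
variable {φ φ' : ℝ → ℝ} (hφ : ∀ t, HasDerivAt φ (φ' t) t) (x₀ : ℝ) (c : ℂ)
include hφ

lemma hasDerivAt_ofReal_comp_sub_mul (x : ℝ) :
    HasDerivAt (fun x => (φ (x - x₀) : ℂ) * c) ((φ' (x - x₀) : ℂ) * c) x :=
  ((hφ (x - x₀)).comp_sub_const x x₀).ofReal_comp.mul_const c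

lemma contDiff_ofReal_comp_sub_mul (hφ' : Continuous φ') :
    ContDiff ℝ 1 (fun x => (φ (x - x₀) : ℂ) * c) := by
  have hg := hasDerivAt_ofReal_comp_sub_mul hφ x₀ c
  rw [contDiff_one_iff_deriv, funext fun x => (hg x).deriv]
  exact ⟨fun x => (hg x).differentiableAt, by fun_prop⟩

lemma C1norm_ofReal_comp_sub_mul_le {A B : ℝ} (hA : ∀ t, |φ t| ≤ A) (hB : ∀ t, |φ' t| ≤ B) :
    C1norm (fun x => (φ (x - x₀) : ℂ) * c) ≤ (A + B) * ‖c‖ := by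
  have hg := hasDerivAt_ofReal_comp_sub_mul hφ x₀ c
  rw [add_mul]
  refine C1norm_le (fun x => (hg x).differentiableAt) (fun x => ?_) (fun x => ?_)
  · rw [norm_mul, Complex.norm_real, Real.norm_eq_abs]
    exact mul_le_mul_of_nonneg_right (hA _) (norm_nonneg c)
  · rw [(hg x).deriv, norm_mul, Complex.norm_real, Real.norm_eq_abs]
    exact mul_le_mul_of_nonneg_right (hB _) (norm_nonneg c)

end

lemma exists_pos_div_sub_lt {d : ℝ} (hd : 0 < d) (a : ℝ) {ε : ℝ} (hε : 0 < ε) :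
    ∃ b, 0 < b ∧ 2 * b < d ∧ a / (d - b) < a / d + ε := by
  have hcont : Tendsto (fun b => a / (d - b)) (𝓝[>] 0) (𝓝 (a / (d - 0))) :=
    ((continuousAt_const.div (continuousAt_const.sub continuousAt_id)
      (by simpa using hd.ne')).tendsto).mono_left nhdsWithin_le_nhds
  rw [sub_zero] at hcont
  have hsmall : ∀ᶠ b in 𝓝[>] (0 : ℝ), b ∈ Ioo 0 (d / 2) := Ioo_mem_nhdsGT (half_pos hd)
  obtain ⟨b, ⟨hb, hbd⟩, hb'⟩ :=
    (hsmall.and (hcont.eventually (gt_mem_nhds (lt_add_of_pos_right _ hε)))).exists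
  exact ⟨b, hb, by linarith, hb'⟩

theorem exists_C1_peak_function_general
    (M : Set ℝ)
    (x₀ : ℝ)
    (hd : 0 < infDist x₀ M)
    (c : ℂ) (ε : ℝ) (hε : 0 < ε) :
    ∃ g : ℝ → ℂ, MemC1 g ∧ g x₀ = c ∧ (∀ x ∈ M, g x = 0) ∧
      C1norm g < ‖c‖ + ‖c‖ / infDist x₀ M + ε := by
  set d := infDist x₀ M
  obtain ⟨b, hb, hbd, hbε⟩ := exists_pos_div_sub_lt hd ‖c‖ hε
  have hφ := hasDerivAt_peakProfile d b
  refine ⟨fun x => (peakProfile d b (x - x₀) : ℂ) * c,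
    (contDiff_ofReal_comp_sub_mul hφ x₀ c (continuous_peakProfileDeriv d b)).contDiffOn,
    by simp [peakProfile_zero hb hbd], fun x hx => ?_, ?_⟩
  · have hdx : d ≤ |x - x₀| := abs_sub_comm x₀ x ▸ infDist_le_dist_of_mem hx
    simp [peakProfile_of_le_abs hb hbd hdx]
  · calc C1norm (fun x => (peakProfile d b (x - x₀) : ℂ) * c)
        ≤ (1 + 1 / (d - b)) * ‖c‖ := C1norm_ofReal_comp_sub_mul_le hφ x₀ c
          (abs_peakProfile_le_one hb hbd) (peakProfileDeriv_abs_le hb hbd)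
      _ = ‖c‖ + ‖c‖ / (d - b) := by ring
      _ < ‖c‖ + ‖c‖ / d + ε := by linarith

/-- Given a closed set `M ⊆ [0,1]` and `x₀ ∈ [0,1] \ M` at distance `d > 0` from `M`,
for every `c ∈ ℂ` and `ε > 0` there is `g ∈ C¹[0,1]` with `g x₀ = c`, `g = 0` on `M`,
and `‖g‖_∞ + ‖g'‖_∞ < |c| + |c|/d + ε`. -/
theorem exists_C1_peak_function
    (M : Set ℝ) (hM : IsClosed M) (hMI : M ⊆ Icc 0 1)
    (x₀ : ℝ) (hx₀ : x₀ ∈ Icc (0:ℝ) 1 \ M)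
    (hd : 0 < infDist x₀ M)
    (c : ℂ) (ε : ℝ) (hε : 0 < ε) :
    ∃ g : ℝ → ℂ, MemC1 g ∧ g x₀ = c ∧ (∀ x ∈ M, g x = 0) ∧
      C1norm g < ‖c‖ + ‖c‖ / infDist x₀ M + ε :=
  exists_C1_peak_function_general M x₀ hd c ε hε
end
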